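/- If the one-sided topological Markov shifts $(X_A,\sigma_A)$ and $(X_B,\sigma_B)$ are strongly continuous orbit equivalent, then the two-sided topological Markov shifts $(\bar{X}_A, \bar{\sigma}_A)$ and $(\bar{X}_B, \bar{\sigma}_B)$ are topologically conjugate: there is a homeomorphism $\bar{h}: \bar{X}_A \to \bar{X}_B$ with $\bar{h}\circ\bar{\sigma}_A = \bar{\sigma}_B\circ\bar{h}$. -/

import Mathlib

open Function Finset

/-- The one-sided topological Markov shift space of a `{0,1}`-matrix `A`. -/
abbrev MarkovShift {N : ℕ} (A : Matrix (Fin N) (Fin N) (Fin 2)) :=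
  {x : ℕ → Fin N // ∀ n : ℕ, A (x n) (x (n + 1)) = 1}

/-- The shift map `σ_A` on the one-sided Markov shift. -/
def mshift {N : ℕ} (A : Matrix (Fin N) (Fin N) (Fin 2)) :
    MarkovShift A → MarkovShift A :=
  fun x => ⟨fun n => x.1 (n + 1), fun n => x.2 (n + 1)⟩

/-- Ergodic sums `f^n(x) = ∑_{i<n} f(σ^i x)`. -/
def esum {X : Type*} (σ : X → X) (f : X → ℕ) (n : ℕ) (x : X) : ℕ :=
  ∑ i ∈ Finset.range n, f (σ^[i] x)
/-- The two-sided topological Markov shift space. -/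
abbrev MarkovShift2 {N : ℕ} (A : Matrix (Fin N) (Fin N) (Fin 2)) :=
  {x : ℤ → Fin N // ∀ n : ℤ, A (x n) (x (n + 1)) = 1}

/-- The two-sided shift map. -/
def mshift2 {N : ℕ} (A : Matrix (Fin N) (Fin N) (Fin 2)) :
    MarkovShift2 A → MarkovShift2 A :=
  fun x => ⟨fun n => x.1 (n + 1), fun n => x.2 (n + 1)⟩

/-- Irreducibility of a `{0,1}`-matrix: any two indices are joined by an admissible path. -/
def MatIrreducible {N : ℕ} (A : Matrix (Fin N) (Fin N) (Fin 2)) : Prop :=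
  ∀ i j : Fin N, ∃ m : ℕ, 0 < m ∧ ∃ p : ℕ → Fin N, p 0 = i ∧ p m = j ∧
    ∀ t < m, A (p t) (p (t + 1)) = 1

/-- Condition (I): non-eventually-periodic points are dense. -/
def CondI {N : ℕ} (A : Matrix (Fin N) (Fin N) (Fin 2)) : Prop :=
  Dense {x : MarkovShift A | ¬ ∃ r s : ℕ, r ≠ s ∧ (mshift A)^[r] x = (mshift A)^[s] x}

/-- Strongly continuous orbit equivalence of one-sided topological Markov shifts. -/
def SCOE {N M : ℕ} (A : Matrix (Fin N) (Fin N) (Fin 2))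
    (B : Matrix (Fin M) (Fin M) (Fin 2)) : Prop :=
  ∃ h : MarkovShift A ≃ₜ MarkovShift B,
  ∃ k1 l1 : MarkovShift A → ℕ, ∃ k2 l2 : MarkovShift B → ℕ,
  ∃ b1 : MarkovShift A → ℕ, ∃ b2 : MarkovShift B → ℕ,
    Continuous k1 ∧ Continuous l1 ∧ Continuous k2 ∧ Continuous l2 ∧
    Continuous b1 ∧ Continuous b2 ∧
    (∀ x, (mshift B)^[k1 x] (h (mshift A x)) = (mshift B)^[l1 x] (h x)) ∧
    (∀ y, (mshift A)^[k2 y] (h.symm (mshift B y)) = (mshift A)^[l2 y] (h.symm y)) ∧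
    (∀ x, (l1 x : ℤ) - (k1 x : ℤ) = 1 + (b1 x : ℤ) - (b1 (mshift A x) : ℤ)) ∧
    (∀ y, (l2 y : ℤ) - (k2 y : ℤ) = 1 + (b2 y : ℤ) - (b2 (mshift B y) : ℤ))

/-!
The maps `φ = σ_B^{b₁} ∘ h` and `ψ = σ_A^{b₂} ∘ h⁻¹` commute with the shifts in all coordinates
beyond a uniform bound, so they induce sliding block codes `φ̄` and `ψ̄` between the two-sided
shifts, and these commute with the shifts. Comparing orbits with lags, the cocycle identities
force `b₁ + b₂ ∘ h` to be shift invariant at every point that is not eventually periodic; by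
condition (I), continuity and irreducibility it is a constant `n`. Then `ψ ∘ φ` and `φ ∘ ψ` agree
with `σⁿ` beyond finitely many coordinates, so `ψ̄ ∘ φ̄` and `φ̄ ∘ ψ̄` are translations by `n`, and
`φ̄` is a continuous bijection between compact Hausdorff spaces.
-/

open Function Topology

section Orbits

variable {X Y : Type*}

def IterateEventuallyEq (σ : X → X) (u : X) (s : ℕ) (v : X) (t : ℕ) : Prop :=
  ∃ a, σ^[a + s] u = σ^[a + t] v

namespace IterateEventuallyEq

variable {σ : X → X} {u v w : X} {s t s' t' : ℕ}

lemma of_eq (h : σ^[s] u = σ^[t] v) : IterateEventuallyEq σ u s v t :=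
  ⟨0, by simpa using h⟩

lemma symm (h : IterateEventuallyEq σ u s v t) : IterateEventuallyEq σ v t u s :=
  let ⟨a, ha⟩ := h
  ⟨a, ha.symm⟩

lemma trans (h : IterateEventuallyEq σ u s v t) (h' : IterateEventuallyEq σ v s' w t') :
    IterateEventuallyEq σ u (s + s') w (t + t') := by
  obtain ⟨a, ha⟩ := h
  obtain ⟨a', ha'⟩ := h'
  refine ⟨a + a', ?_⟩
  calc σ^[a + a' + (s + s')] u = σ^[a' + s'] (σ^[a + s] u) := by
        rw [← iterate_add_apply, show a' + s' + (a + s) = a + a' + (s + s') by omega]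
    _ = σ^[a + t] (σ^[a' + s'] v) := by rw [ha, ← iterate_add_apply, ← iterate_add_apply, add_comm]
    _ = σ^[a + a' + (t + t')] w := by
        rw [ha', ← iterate_add_apply, show a + t + (a' + t') = a + a' + (t + t') by omega]

lemma of_add_add {r : ℕ} (h : IterateEventuallyEq σ u (r + s) v (r + t)) :
    IterateEventuallyEq σ u s v t :=
  let ⟨a, ha⟩ := h
  ⟨a + r, by rwa [add_assoc, add_assoc]⟩

lemma eq_of_not_eventuallyPeriodic (hu : ¬ ∃ r s : ℕ, r ≠ s ∧ σ^[r] u = σ^[s] u)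
    (h : IterateEventuallyEq σ u s u t) : s = t := by
  obtain ⟨a, ha⟩ := h
  by_contra hst
  exact hu ⟨a + s, a + t, by omega, ha⟩

end IterateEventuallyEq

lemma esum_succ (σ : X → X) (f : X → ℕ) (m : ℕ) (x : X) :
    esum σ f (m + 1) x = esum σ f m x + f (σ^[m] x) :=
  Finset.sum_range_succ _ _

lemma esum_le {σ : X → X} {f : X → ℕ} {K : ℕ} (hf : ∀ x, f x ≤ K) (m : ℕ) (x : X) :
    esum σ f m x ≤ m * K := by
  unfold esum
  simpa using Finset.sum_le_card_nsmul (Finset.range m) _ K fun i _ => hf (σ^[i] x)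

structure OrbitCocycle (σ : X → X) (τ : Y → Y) (f : X → Y) (k l b : X → ℕ) : Prop where
  iterate_map_eq : ∀ x, τ^[k x] (f (σ x)) = τ^[l x] (f x)
  sub_eq : ∀ x, (l x : ℤ) - k x = 1 + b x - b (σ x)

def iterateBy (τ : Y → Y) (b : X → ℕ) (f : X → Y) (x : X) : Y :=
  τ^[b x] (f x)

namespace OrbitCocycle

variable {σ : X → X} {τ : Y → Y} {f : X → Y} {k l b : X → ℕ}

lemma iterate_esum_map_iterate (hf : OrbitCocycle σ τ f k l b) (m : ℕ) (x : X) :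
    τ^[esum σ k m x] (f (σ^[m] x)) = τ^[esum σ l m x] (f x) := by
  induction m with
  | zero => rfl
  | succ m ih =>
    rw [esum_succ, esum_succ, add_comm (esum σ l m x), iterate_add_apply, iterate_succ_apply',
      hf.iterate_map_eq, ← iterate_add_apply, add_comm, iterate_add_apply, ih,
      ← iterate_add_apply]

lemma esum_add_eq (hf : OrbitCocycle σ τ f k l b) (m : ℕ) (x : X) :
    esum σ l m x + b (σ^[m] x) = esum σ k m x + m + b x := by
  induction m with
  | zero => simp [esum]
  | succ m ih =>
    have h := hf.sub_eq (σ^[m] x)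
    rw [← iterate_succ_apply' σ m x, Nat.succ_eq_add_one] at h
    rw [esum_succ, esum_succ]
    omega

lemma iterate_esum_iterateBy (hf : OrbitCocycle σ τ f k l b) (m : ℕ) (x : X) :
    τ^[esum σ k m x] (iterateBy τ b f (σ^[m] x)) = τ^[esum σ k m x + m] (iterateBy τ b f x) := by
  simp only [iterateBy]
  rw [← iterate_add_apply, add_comm, iterate_add_apply, hf.iterate_esum_map_iterate,
    ← iterate_add_apply, ← iterate_add_apply, add_comm (b _), hf.esum_add_eq]

lemma iterate_iterateBy_apply (hf : OrbitCocycle σ τ f k l b) (x : X) :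
    τ^[k x] (iterateBy τ b f (σ x)) = τ^[k x + 1] (iterateBy τ b f x) := by
  simpa [esum] using hf.iterate_esum_iterateBy 1 x

lemma iterateEventuallyEq_iterateBy (hf : OrbitCocycle σ τ f k l b) {u v : X} {s t : ℕ}
    (h : IterateEventuallyEq σ u s v t) :
    IterateEventuallyEq τ (iterateBy τ b f u) s (iterateBy τ b f v) t := by
  obtain ⟨a, ha⟩ := h
  have hu : IterateEventuallyEq τ (iterateBy τ b f (σ^[a + s] u)) 0 (iterateBy τ b f u) (a + s) :=
    ⟨_, hf.iterate_esum_iterateBy (a + s) u⟩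
  have hv : IterateEventuallyEq τ (iterateBy τ b f (σ^[a + t] v)) 0 (iterateBy τ b f v) (a + t) :=
    ⟨_, hf.iterate_esum_iterateBy (a + t) v⟩
  rw [ha] at hu
  exact IterateEventuallyEq.of_add_add (r := a) (by simpa using hu.symm.trans hv)

lemma iterate_iterateBy_iterateBy {g : Y → X} {k' l' b' : Y → ℕ}
    (hg : OrbitCocycle τ σ g k' l' b') (hgf : LeftInverse g f) (x : X) :
    σ^[esum τ k' (b x) (f x)] (iterateBy σ b' g (iterateBy τ b f x))
      = σ^[esum τ k' (b x) (f x) + (b x + b' (f x))] x := by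
  rw [show iterateBy τ b f x = τ^[b x] (f x) from rfl, hg.iterate_esum_iterateBy, iterateBy, hgf x,
    ← iterate_add_apply, add_assoc]

lemma add_map_apply_eq_of_not_eventuallyPeriodic {g : Y → X} {k' l' b' : Y → ℕ}
    (hf : OrbitCocycle σ τ f k l b) (hg : OrbitCocycle τ σ g k' l' b') (hgf : LeftInverse g f)
    {x : X} (hx : ¬ ∃ r s : ℕ, r ≠ s ∧ σ^[r] x = σ^[s] x) :
    b (σ x) + b' (f (σ x)) = b x + b' (f x) := by
  have hψφ (y : X) : IterateEventuallyEq σ (iterateBy σ b' g (iterateBy τ b f y)) 0 y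
      (b y + b' (f y)) :=
    ⟨_, hg.iterate_iterateBy_iterateBy hgf y⟩
  have hstep : IterateEventuallyEq τ (iterateBy τ b f (σ x)) 0 (iterateBy τ b f x) 1 :=
    ⟨_, hf.iterate_iterateBy_apply x⟩
  -- Following `σ x` and `x` through `ψ ∘ φ` relates `x` to itself with the lags
  -- `c (σ x) + 1` and `1 + c x`, where `c = b + b' ∘ f`.
  have hloop := ((hψφ (σ x)).trans (IterateEventuallyEq.of_eq (σ := σ) (s := 0) (t := 1) rfl)).symm
    |>.trans ((hg.iterateEventuallyEq_iterateBy hstep).trans (hψφ x))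
  have := hloop.eq_of_not_eventuallyPeriodic hx
  omega

end OrbitCocycle

end Orbits

lemma continuous_iterateBy {X Y : Type*} [TopologicalSpace X] [TopologicalSpace Y] {τ : Y → Y}
    {b : X → ℕ} {f : X → Y} (hτ : Continuous τ) (hb : Continuous b) (hf : Continuous f) :
    Continuous (iterateBy τ b f) :=
  (continuous_prod_of_discrete_left.mpr fun n => hτ.iterate n : Continuous fun p : ℕ × Y =>
    τ^[p.1] p.2).comp (hb.prodMk hf)

lemma exists_forall_le_of_continuous {X : Type*} [TopologicalSpace X] [CompactSpace X]
    {f : X → ℕ} (hf : Continuous f) : ∃ K, ∀ x, f x ≤ K :=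
  let ⟨K, hK⟩ := (isCompact_range hf).bddAbove
  ⟨K, fun x => hK ⟨x, rfl⟩⟩

lemma isClosed_setOf_admissible (ι : Type*) [Add ι] [One ι] {N : ℕ}
    (A : Matrix (Fin N) (Fin N) (Fin 2)) :
    IsClosed {x : ι → Fin N | ∀ n, A (x n) (x (n + 1)) = 1} := by
  simp only [Set.ofPred_forall]
  exact isClosed_iInter fun n => isClosed_eq
    ((continuous_of_discreteTopology (f := fun p : Fin N × Fin N => A p.1 p.2)).comp₂
      (continuous_apply n) (continuous_apply (n + 1))) continuous_const

section OneSided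

variable {N : ℕ} {A : Matrix (Fin N) (Fin N) (Fin 2)}

instance : CompactSpace (MarkovShift A) :=
  isCompact_iff_compactSpace.mp (isClosed_setOf_admissible ℕ A).isCompact

@[simp]
lemma mshift_iterate_apply (x : MarkovShift A) (m i : ℕ) :
    ((mshift A)^[m] x).1 i = x.1 (i + m) := by
  induction m generalizing x with
  | zero => rfl
  | succ m ih => rw [iterate_succ_apply, ih]; rfl

lemma continuous_mshift : Continuous (mshift A) :=
  continuous_induced_rng.2 <| continuous_pi fun n =>
    (continuous_apply (n + 1)).comp continuous_subtype_val

lemma val_eq_of_iterate_eq {u v : MarkovShift A} {a s : ℕ}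
    (h : (mshift A)^[a] u = (mshift A)^[a + s] v) {i : ℕ} (hi : a ≤ i) :
    u.1 i = v.1 (i + s) := by
  have := congrArg (fun z : MarkovShift A => z.1 (i - a)) h
  simp only [mshift_iterate_apply] at this
  rwa [show i - a + a = i by omega, show i - a + (a + s) = i + s by omega] at this

lemma exists_cylinder_subset {z : MarkovShift A} {s : Set (MarkovShift A)} (hs : s ∈ 𝓝 z) :
    ∃ L, ∀ w : MarkovShift A, (∀ i < L, w.1 i = z.1 i) → w ∈ s := by
  obtain ⟨t, ht, hts⟩ := mem_nhds_subtype _ z s |>.mp hs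
  obtain ⟨_, ⟨y, L, rfl⟩, hzy, hys⟩ := (PiNat.isTopologicalBasis_cylinders _).mem_nhds_iff.mp ht
  refine ⟨L, fun w hw => hts (hys ?_)⟩
  rw [← PiNat.mem_cylinder_iff_eq.mp hzy]
  exact hw

lemma exists_admissible_append {u : ℕ → Fin N} {n : ℕ} (hu : ∀ t < n, A (u t) (u (t + 1)) = 1)
    (v : MarkovShift A) (huv : u n = v.1 0) :
    ∃ w : MarkovShift A, (∀ i ≤ n, w.1 i = u i) ∧ (mshift A)^[n] w = v := by
  refine ⟨⟨fun i => if i < n then u i else v.1 (i - n), fun t => ?_⟩, fun i hi => ?_, ?_⟩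
  · dsimp only
    split_ifs with h1 h2 h2
    · exact hu t (by omega)
    · rw [show t + 1 - n = 0 by omega, ← huv, show n = t + 1 by omega]
      exact hu t (by omega)
    · omega
    · rw [show t + 1 - n = t - n + 1 by omega]
      exact v.2 _
  · dsimp only
    split_ifs with h
    · rfl
    · rw [show i = n by omega, Nat.sub_self, huv]
  · exact Subtype.ext <| funext fun i => by simp

lemma exists_iterate_eq_of_irreducible (hA : MatIrreducible A) (z x : MarkovShift A) (L : ℕ) :
    ∃ w : MarkovShift A, ∃ n, (∀ i < L, w.1 i = z.1 i) ∧ (mshift A)^[n] w = x := by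
  obtain ⟨m, -, p, hp0, hpm, hp⟩ := hA (z.1 L) (x.1 0)
  obtain ⟨y, hyp, hyx⟩ := exists_admissible_append hp x hpm
  obtain ⟨w, hwz, hwy⟩ := exists_admissible_append (fun t _ => z.2 t) y
    (by rw [hyp 0 m.zero_le, hp0])
  exact ⟨w, m + L, fun i hi => hwz i hi.le, by rw [iterate_add_apply, hwy, hyx]⟩

lemma apply_eq_of_irreducible {T : Type*} [TopologicalSpace T] [DiscreteTopology T]
    (hA : MatIrreducible A) {c : MarkovShift A → T} (hc : Continuous c)
    (hinv : c ∘ mshift A = c) (z x : MarkovShift A) : c z = c x := by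
  obtain ⟨L, hL⟩ := exists_cylinder_subset
    (hc.continuousAt.preimage_mem_nhds ((isOpen_discrete {c z}).mem_nhds rfl))
  obtain ⟨w, n, hwz, hwx⟩ := exists_iterate_eq_of_irreducible hA z x L
  calc c z = c w := (hL w hwz).symm
    _ = c x := by rw [← hwx, ← comp_apply (f := c), iterate_invariant hinv]

end OneSided

section Cocycle

variable {N M : ℕ} {A : Matrix (Fin N) (Fin N) (Fin 2)} {B : Matrix (Fin M) (Fin M) (Fin 2)}

def ShiftCommutesFrom (φ : MarkovShift A → MarkovShift B) (K : ℕ) : Prop :=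
  ∀ z i, K ≤ i → (φ (mshift A z)).1 i = (φ z).1 (i + 1)

lemma ShiftCommutesFrom.iterate {φ : MarkovShift A → MarkovShift B} {K : ℕ}
    (hφ : ShiftCommutesFrom φ K) (m : ℕ) (z : MarkovShift A) {i : ℕ} (hi : K ≤ i) :
    (φ ((mshift A)^[m] z)).1 i = (φ z).1 (i + m) := by
  induction m generalizing i with
  | zero => rfl
  | succ m ih => rw [iterate_succ_apply', hφ _ i hi, ih (by omega), add_assoc, add_comm 1]

namespace OrbitCocycle

variable {f : MarkovShift A → MarkovShift B} {k l b : MarkovShift A → ℕ}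

lemma shiftCommutesFrom (hf : OrbitCocycle (mshift A) (mshift B) f k l b) {K : ℕ}
    (hK : ∀ x, k x ≤ K) : ShiftCommutesFrom (iterateBy (mshift B) b f) K :=
  fun z _ hi => val_eq_of_iterate_eq (hf.iterate_iterateBy_apply z) ((hK z).trans hi)

lemma val_iterateBy_iterateBy {g : MarkovShift B → MarkovShift A} {k' l' b' : MarkovShift B → ℕ}
    (hg : OrbitCocycle (mshift B) (mshift A) g k' l' b') (hgf : LeftInverse g f) {Kb K' : ℕ}
    (hb : ∀ x, b x ≤ Kb) (hk' : ∀ y, k' y ≤ K') (x : MarkovShift A) {i : ℕ} (hi : Kb * K' ≤ i) :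
    (iterateBy (mshift A) b' g (iterateBy (mshift B) b f x)).1 i = x.1 (i + (b x + b' (f x))) :=
  val_eq_of_iterate_eq (hg.iterate_iterateBy_iterateBy hgf x)
    (((esum_le hk' _ _).trans (Nat.mul_le_mul_right _ (hb x))).trans hi)

lemma exists_forall_add_map_eq (hA : MatIrreducible A) (hIA : CondI A) (hfc : Continuous f)
    {g : MarkovShift B → MarkovShift A} {k' l' b' : MarkovShift B → ℕ}
    (hf : OrbitCocycle (mshift A) (mshift B) f k l b)
    (hg : OrbitCocycle (mshift B) (mshift A) g k' l' b') (hgf : LeftInverse g f)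
    (hb : Continuous b) (hb' : Continuous b') : ∃ n, ∀ x, b x + b' (f x) = n := by
  have hc : Continuous fun x => b x + b' (f x) := hb.add (hb'.comp hfc)
  have hinv : (fun x => b x + b' (f x)) ∘ mshift A = fun x => b x + b' (f x) :=
    Continuous.ext_on hIA (hc.comp continuous_mshift) hc fun x hx =>
      hf.add_map_apply_eq_of_not_eventuallyPeriodic hg hgf hx
  rcases isEmpty_or_nonempty (MarkovShift A) with _ | ⟨⟨x₀⟩⟩
  · exact ⟨0, isEmptyElim⟩
  · exact ⟨_, fun x => apply_eq_of_irreducible hA hc hinv x x₀⟩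

end OrbitCocycle

end Cocycle

namespace MarkovShift2

variable {N M : ℕ} {A : Matrix (Fin N) (Fin N) (Fin 2)} {B : Matrix (Fin M) (Fin M) (Fin 2)}

instance : CompactSpace (MarkovShift2 A) :=
  isCompact_iff_compactSpace.mp (isClosed_setOf_admissible ℤ A).isCompact

lemma ext {x y : MarkovShift2 A} (h : ∀ n, x.1 n = y.1 n) : x = y :=
  Subtype.ext (funext h)

def tail (x : MarkovShift2 A) (k : ℤ) : MarkovShift A :=
  ⟨fun m => x.1 (k + m), fun m => by simpa [add_assoc] using x.2 (k + m)⟩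

@[simp]
lemma tail_apply (x : MarkovShift2 A) (k : ℤ) (m : ℕ) : (tail x k).1 m = x.1 (k + m) :=
  rfl

lemma mshift_iterate_tail (x : MarkovShift2 A) (k : ℤ) (m : ℕ) :
    (mshift A)^[m] (tail x k) = tail x (k + m) :=
  Subtype.ext <| funext fun i => by simp [add_assoc, add_comm (i : ℤ)]

lemma tail_mshift2 (x : MarkovShift2 A) (k : ℤ) : tail (mshift2 A x) k = tail x (k + 1) :=
  Subtype.ext <| funext fun i => by
    change x.1 (k + i + 1) = x.1 (k + 1 + i)
    ring_nf

def shiftBy (t : ℤ) (x : MarkovShift2 A) : MarkovShift2 A :=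
  ⟨fun n => x.1 (n + t), fun n => by simpa [add_right_comm] using x.2 (n + t)⟩

lemma shiftBy_bijective (t : ℤ) : Bijective (shiftBy (A := A) t) :=
  bijective_iff_has_inverse.mpr ⟨shiftBy (-t),
    fun x => ext fun n => by simp [shiftBy], fun x => ext fun n => by simp [shiftBy]⟩

variable {φ : MarkovShift A → MarkovShift B} {K : ℕ}

/-- Beyond position `K` the coordinates of `φ` commute with the shift, so reading them there
gives a well-defined two-sided sequence. -/
def slidingBlockCode (hφ : ShiftCommutesFrom φ K) (x : MarkovShift2 A) : MarkovShift2 B :=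
  ⟨fun n => (φ (tail x (n - K))).1 K, fun n => by
    have h := hφ (tail x (n - K)) K le_rfl
    rw [← iterate_one (mshift A), mshift_iterate_tail] at h
    change B ((φ (tail x (n - K))).1 K) ((φ (tail x (n + 1 - K))).1 K) = 1
    rw [show n + 1 - K = n - K + (1 : ℕ) by push_cast; ring, h]
    exact (φ _).2 K⟩

lemma slidingBlockCode_apply_of_le (hφ : ShiftCommutesFrom φ K) (x : MarkovShift2 A) (n : ℤ) {d : ℕ}
    (hd : K ≤ d) : (slidingBlockCode hφ x).1 n = (φ (tail x (n - d))).1 d := by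
  have h := hφ.iterate (d - K) (tail x (n - d)) le_rfl
  rwa [mshift_iterate_tail, show n - d + (d - K : ℕ) = n - K by omega,
    Nat.add_sub_cancel' hd] at h

lemma slidingBlockCode_mshift2 (hφ : ShiftCommutesFrom φ K) (x : MarkovShift2 A) :
    slidingBlockCode hφ (mshift2 A x) = mshift2 B (slidingBlockCode hφ x) :=
  ext fun n => by
    change (φ (tail (mshift2 A x) (n - K))).1 K = (φ (tail x (n + 1 - K))).1 K
    rw [tail_mshift2, sub_add_eq_add_sub]

lemma continuous_slidingBlockCode (hφ : ShiftCommutesFrom φ K) (hφc : Continuous φ) :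
    Continuous (slidingBlockCode hφ) := by
  refine continuous_induced_rng.2 (continuous_pi fun n => ?_)
  have htail : Continuous fun x : MarkovShift2 A => tail x (n - K) :=
    continuous_induced_rng.2 <| continuous_pi fun m =>
      (continuous_apply (n - K + m)).comp continuous_subtype_val
  exact (continuous_apply K).comp (continuous_subtype_val.comp (hφc.comp htail))

lemma slidingBlockCode_slidingBlockCode {ψ : MarkovShift B → MarkovShift A} {K' c n : ℕ}
    (hφ : ShiftCommutesFrom φ K) (hψ : ShiftCommutesFrom ψ K')
    (hψφ : ∀ x i, c ≤ i → (ψ (φ x)).1 i = x.1 (i + n)) (x : MarkovShift2 A) :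
    slidingBlockCode hψ (slidingBlockCode hφ x) = shiftBy n x := by
  have htail (j : ℤ) :
      tail (slidingBlockCode hφ x) j = (mshift B)^[K + c] (φ (tail x (j - (K + c : ℕ)))) :=
    Subtype.ext <| funext fun m => by
      rw [tail_apply, slidingBlockCode_apply_of_le hφ x _ (show K ≤ m + (K + c) by omega),
        mshift_iterate_apply, show j + m - (m + (K + c) : ℕ) = j - (K + c : ℕ) by push_cast; ring]
  refine ext fun m => ?_
  change (ψ (tail (slidingBlockCode hφ x) (m - K'))).1 K' = x.1 (m + n)
  rw [htail, hψ.iterate _ _ le_rfl, hψφ _ _ (by omega), tail_apply]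
  exact congrArg x.1 (by push_cast; ring)

end MarkovShift2

theorem scoe_implies_two_sided_conjugacy_general {N M : ℕ}
    (A : Matrix (Fin N) (Fin N) (Fin 2)) (B : Matrix (Fin M) (Fin M) (Fin 2))
    (hirrA : MatIrreducible A)
    (hIA : CondI A)
    (hscoe : SCOE A B) :
    ∃ hbar : MarkovShift2 A ≃ₜ MarkovShift2 B,
      ∀ x : MarkovShift2 A, hbar (mshift2 A x) = mshift2 B (hbar x) := by
  obtain ⟨h, k1, l1, k2, l2, b1, b2, hk1, -, hk2, -, hb1, hb2, h1, h2, c1, c2⟩ := hscoe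
  have hf : OrbitCocycle (mshift A) (mshift B) h k1 l1 b1 := ⟨h1, c1⟩
  have hg : OrbitCocycle (mshift B) (mshift A) h.symm k2 l2 b2 := ⟨h2, c2⟩
  obtain ⟨n, hn⟩ := hf.exists_forall_add_map_eq hirrA hIA h.continuous hg h.symm_apply_apply hb1 hb2
  have hn' (y : MarkovShift B) : b2 y + b1 (h.symm y) = n := by
    rw [← hn (h.symm y), h.apply_symm_apply, add_comm]
  obtain ⟨K1, hK1⟩ := exists_forall_le_of_continuous hk1
  obtain ⟨K2, hK2⟩ := exists_forall_le_of_continuous hk2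
  obtain ⟨B1, hB1⟩ := exists_forall_le_of_continuous hb1
  obtain ⟨B2, hB2⟩ := exists_forall_le_of_continuous hb2
  have hφ := hf.shiftCommutesFrom hK1
  have hψ := hg.shiftCommutesFrom hK2
  set φ₂ := MarkovShift2.slidingBlockCode hφ
  set ψ₂ := MarkovShift2.slidingBlockCode hψ
  have hψφ : ψ₂ ∘ φ₂ = MarkovShift2.shiftBy n :=
    funext <| MarkovShift2.slidingBlockCode_slidingBlockCode hφ hψ fun x _ hi => by
      rw [hg.val_iterateBy_iterateBy h.symm_apply_apply hB1 hK2 x hi, hn]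
  have hφψ : φ₂ ∘ ψ₂ = MarkovShift2.shiftBy n :=
    funext <| MarkovShift2.slidingBlockCode_slidingBlockCode hψ hφ fun y _ hi => by
      rw [hf.val_iterateBy_iterateBy h.apply_symm_apply hB2 hK1 y hi, hn']
  have hbij : Bijective φ₂ := ⟨.of_comp (f := ψ₂) (hψφ ▸ (MarkovShift2.shiftBy_bijective _).1),
    .of_comp (hφψ ▸ (MarkovShift2.shiftBy_bijective _).2)⟩
  have hcont : Continuous φ₂ := MarkovShift2.continuous_slidingBlockCode hφ
    (continuous_iterateBy continuous_mshift hb1 h.continuous)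
  exact ⟨hcont.homeoOfEquivCompactToT2 (f := Equiv.ofBijective φ₂ hbij),
    MarkovShift2.slidingBlockCode_mshift2 hφ⟩

/-- strongly continuous orbit equivalence of the one-sided Markov shifts
implies topological conjugacy of the two-sided Markov shifts. -/
theorem scoe_implies_two_sided_conjugacy {N M : ℕ}
    (A : Matrix (Fin N) (Fin N) (Fin 2)) (B : Matrix (Fin M) (Fin M) (Fin 2))
    (hirrA : MatIrreducible A) (hirrB : MatIrreducible B)
    (hIA : CondI A) (hIB : CondI B)
    (hscoe : SCOE A B) :
    ∃ hbar : MarkovShift2 A ≃ₜ MarkovShift2 B,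
      ∀ x : MarkovShift2 A, hbar (mshift2 A x) = mshift2 B (hbar x) :=
  scoe_implies_two_sided_conjugacy_general A B hirrA hIA hscoe
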